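/- (KL bound for product Bernoulli likelihoods.) Let ι be a finite index set and a, b : ι → ℝ. Let P_a be the product measure ⊗_{i ∈ ι} Bernoulli(p_{a(i)}) and P_b = ⊗_{i ∈ ι} Bernoulli(p_{b(i)}). Then D_KL(P_a ‖ P_b) ≤ Σ_{i ∈ ι} (a(i) − b(i))². -/

import Mathlib

open MeasureTheory

/-- The logistic function `x ↦ 1/(1 + e^{−x})`. -/
noncomputable def logistic (x : ℝ) : ℝ := 1 / (1 + Real.exp (-x))

lemma logistic_le_one (x : ℝ) : logistic x ≤ 1 := by
  rw [logistic, div_le_one (by positivity)]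
  linarith [Real.exp_pos (-x)]

/-- The Bernoulli measure on `{0,1}` (identified with `Bool`) with success probability
`1/(1 + e^{−x})`. -/
noncomputable def bernoulliLogit (x : ℝ) : Measure Bool :=
  (PMF.bernoulli (Real.toNNReal (logistic x))
    (Real.toNNReal_le_one.mpr (logistic_le_one x))).toMeasure

instance (x : ℝ) : IsProbabilityMeasure (bernoulliLogit x) := by
  unfold bernoulliLogit; infer_instance

/-!
Write `σ` for the logistic function and `s(x) = log (1 + eˣ)` for its antiderivative, the
softplus function. Since `log σ(x) = x - s(x)` and `log (1 - σ(x)) = -s(x)`, the divergence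
`KL(Bernoulli σ(a) ‖ Bernoulli σ(b)) = s(b) - s(a) - σ(a) (b - a)` is the Bregman divergence of `s`,
and since `σ' = σ (1 - σ) ≤ 1/4` the mean value inequality bounds it by `(b - a)² / 4`.
All the measures charge every point of a finite space, so the log-likelihood ratio of the
products is the sum of the coordinatewise ones, and integrating it against a product measure
gives the sum of the coordinatewise divergences.
-/

open Real
open scoped NNReal

lemma logistic_eq_sigmoid : logistic = sigmoid := funext fun _ => one_div _

lemma abs_sub_sub_mul_sub_le_of_lipschitzWith {f f' : ℝ → ℝ} {K : ℝ≥0}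
    (hf : ∀ x, HasDerivAt f (f' x) x) (hf' : LipschitzWith K f') (a b : ℝ) :
    |f b - f a - f' a * (b - a)| ≤ K * (b - a) ^ 2 := by
  have hderiv : ∀ x ∈ Set.uIcc a b,
      HasDerivWithinAt (fun y => f y - f' a * y) (f' x - f' a) (Set.uIcc a b) x := fun x _ => by
    simpa using ((hf x).fun_sub ((hasDerivAt_id x).const_mul (f' a))).hasDerivWithinAt
  have hbound : ∀ x ∈ Set.uIcc a b, ‖f' x - f' a‖ ≤ K * |b - a| := fun x hx =>
    (hf'.dist_le_mul x a).trans <| by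
      rw [dist_eq_norm]; gcongr; exact Set.abs_sub_left_of_mem_uIcc hx
  have := (convex_uIcc a b).norm_image_sub_le_of_norm_hasDerivWithin_le hderiv hbound
    Set.left_mem_uIcc Set.right_mem_uIcc
  rw [Real.norm_eq_abs, Real.norm_eq_abs, mul_assoc, ← sq, sq_abs] at this
  convert this using 2
  ring

lemma lipschitzWith_sigmoid : LipschitzWith (1 / 4) sigmoid := by
  refine lipschitzWith_of_nnnorm_deriv_le differentiable_sigmoid fun x => ?_
  rw [deriv_sigmoid, ← NNReal.coe_le_coe, coe_nnnorm, Real.norm_of_nonneg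
    (mul_nonneg (sigmoid_pos x).le (sub_pos.2 (sigmoid_lt_one x)).le)]
  push_cast
  nlinarith [sq_nonneg (2 * sigmoid x - 1)]

noncomputable def softplus (x : ℝ) : ℝ := log (1 + exp x)

lemma sigmoid_eq_exp_div (x : ℝ) : sigmoid x = exp x / (1 + exp x) := by
  rw [sigmoid_def, exp_neg]
  field_simp
  ring

lemma hasDerivAt_softplus (x : ℝ) : HasDerivAt softplus (sigmoid x) x := by
  rw [sigmoid_eq_exp_div]
  exact ((hasDerivAt_exp x).const_add 1).log (by positivity)

lemma log_one_sub_sigmoid (x : ℝ) : log (1 - sigmoid x) = -softplus x := by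
  rw [← sigmoid_neg, sigmoid_def, neg_neg, log_inv, softplus]

lemma log_sigmoid (x : ℝ) : log (sigmoid x) = x - softplus x := by
  rw [sigmoid_eq_exp_div, log_div (exp_pos x).ne' (by positivity), log_exp, softplus]

section Discrete

variable {α : Type*} [MeasurableSpace α] [Countable α] [MeasurableSingletonClass α]
  {μ ν : Measure α} [IsFiniteMeasure ν]

lemma rnDeriv_eq_div_of_forall_singleton_ne_zero (hν : ∀ x, ν {x} ≠ 0) (x : α) :
    μ.rnDeriv ν x = μ {x} / ν {x} := by
  have hμ : μ = ν.withDensity fun x => μ {x} / ν {x} := Measure.ext_iff_singleton.2 fun x => by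
    rw [withDensity_apply _ (measurableSet_singleton x), Measure.restrict_singleton,
      lintegral_smul_measure, lintegral_dirac, smul_eq_mul,
      ENNReal.mul_div_cancel (hν x) (measure_ne_top ν {x})]
  have hae : μ.rnDeriv ν =ᵐ[ν] fun x => μ {x} / ν {x} := by
    conv_lhs => rw [hμ]
    exact Measure.rnDeriv_withDensity ν (measurable_of_countable _)
  by_contra hx
  exact hν x (measure_mono_null (Set.singleton_subset_iff.2 hx) (ae_iff.1 hae))

lemma llr_apply_of_forall_singleton_ne_zero (hν : ∀ x, ν {x} ≠ 0) (x : α) :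
    llr μ ν x = log (μ.real {x} / ν.real {x}) := by
  rw [llr, rnDeriv_eq_div_of_forall_singleton_ne_zero hν, ENNReal.toReal_div]
  rfl

end Discrete

lemma llr_pi_apply {ι : Type*} [Fintype ι] {α : ι → Type*} [∀ i, MeasurableSpace (α i)]
    [∀ i, Countable (α i)] [∀ i, MeasurableSingletonClass (α i)] {μ ν : (i : ι) → Measure (α i)}
    [∀ i, IsFiniteMeasure (μ i)] [∀ i, IsFiniteMeasure (ν i)]
    (hμ : ∀ i x, μ i {x} ≠ 0) (hν : ∀ i x, ν i {x} ≠ 0) (y : (i : ι) → α i) :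
    llr (Measure.pi μ) (Measure.pi ν) y = ∑ i, llr (μ i) (ν i) (y i) := by
  rw [llr_apply_of_forall_singleton_ne_zero
    (fun y => by simp [Measure.pi_singleton, Finset.prod_ne_zero_iff, hν]) y]
  simp only [llr_apply_of_forall_singleton_ne_zero (hν _), Measure.real, Measure.pi_singleton,
    ENNReal.toReal_prod, ← Finset.prod_div_distrib]
  refine log_prod fun i _ => div_ne_zero ?_ ?_ <;>
    exact ENNReal.toReal_ne_zero.2 ⟨by simp [hμ, hν], measure_ne_top _ _⟩

lemma bernoulliLogit_singleton (x : ℝ) (t : Bool) :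
    bernoulliLogit x {t} = ENNReal.ofReal (if t then sigmoid x else 1 - sigmoid x) := by
  rw [bernoulliLogit, PMF.toMeasure_apply_singleton _ _ (measurableSet_singleton t),
    PMF.bernoulli_apply, logistic_eq_sigmoid]
  cases t
  · rw [cond_false, if_neg Bool.false_ne_true, ENNReal.ofReal_sub _ (sigmoid_pos x).le,
      ENNReal.coe_sub, ENNReal.ofReal_one, ENNReal.coe_one]
    rfl
  · rfl

lemma bernoulliLogit_singleton_ne_zero (x : ℝ) (t : Bool) : bernoulliLogit x {t} ≠ 0 := by
  rw [bernoulliLogit_singleton, ne_eq, ENNReal.ofReal_eq_zero, not_le]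
  split_ifs
  exacts [sigmoid_pos x, sub_pos.2 (sigmoid_lt_one x)]

lemma bernoulliLogit_real_singleton (x : ℝ) (t : Bool) :
    (bernoulliLogit x).real {t} = if t then sigmoid x else 1 - sigmoid x := by
  rw [Measure.real, bernoulliLogit_singleton, ENNReal.toReal_ofReal]
  split_ifs
  exacts [(sigmoid_pos x).le, (sub_pos.2 (sigmoid_lt_one x)).le]

lemma integral_llr_bernoulliLogit (a b : ℝ) :
    ∫ t, llr (bernoulliLogit a) (bernoulliLogit b) t ∂bernoulliLogit a
      = softplus b - softplus a - sigmoid a * (b - a) := by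
  rw [integral_fintype .of_finite, Fintype.sum_bool]
  simp only [llr_apply_of_forall_singleton_ne_zero (bernoulliLogit_singleton_ne_zero b),
    bernoulliLogit_real_singleton, if_true, if_false, Bool.false_eq_true, smul_eq_mul]
  rw [log_div (sigmoid_pos a).ne' (sigmoid_pos b).ne',
    log_div (sub_pos.2 (sigmoid_lt_one a)).ne' (sub_pos.2 (sigmoid_lt_one b)).ne',
    log_sigmoid, log_sigmoid, log_one_sub_sigmoid, log_one_sub_sigmoid]
  ring

lemma integral_llr_bernoulliLogit_le (a b : ℝ) :
    ∫ t, llr (bernoulliLogit a) (bernoulliLogit b) t ∂bernoulliLogit a ≤ (a - b) ^ 2 := by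
  rw [integral_llr_bernoulliLogit]
  calc _ ≤ _ := le_abs_self _
    _ ≤ (1 / 4 : ℝ≥0) * (b - a) ^ 2 :=
      abs_sub_sub_mul_sub_le_of_lipschitzWith hasDerivAt_softplus lipschitzWith_sigmoid a b
    _ ≤ (a - b) ^ 2 := by push_cast; nlinarith [sq_nonneg (a - b)]

/-- KL bound for product Bernoulli likelihoods: with `P_a = ⊗_i Bernoulli(p_{a i})` and
`P_b = ⊗_i Bernoulli(p_{b i})`, `D_KL(P_a ‖ P_b) = ∫ log(dP_a/dP_b) dP_a ≤ Σ_i (aᵢ − bᵢ)²`. -/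
theorem klDiv_product_bernoulli_le
    {ι : Type*} [Fintype ι] (a b : ι → ℝ) :
    ∫ y, Real.log (((Measure.pi fun i => bernoulliLogit (a i)).rnDeriv
          (Measure.pi fun i => bernoulliLogit (b i)) y).toReal)
        ∂(Measure.pi fun i => bernoulliLogit (a i))
      ≤ ∑ i : ι, (a i - b i) ^ 2 := by
  change ∫ y, llr _ _ y ∂_ ≤ _
  simp_rw [llr_pi_apply (fun i => bernoulliLogit_singleton_ne_zero (a i))
    (fun i => bernoulliLogit_singleton_ne_zero (b i))]
  rw [integral_finsetSum _ fun i _ => Integrable.of_finite]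
  refine Finset.sum_le_sum fun i _ => ?_
  rw [integral_comp_eval (measurable_of_countable _).aestronglyMeasurable]
  exact integral_llr_bernoulliLogit_le (a i) (b i)
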